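/- arXiv:2309.10562 — 5 statements merged into one kernel-verified Lean document; each statement's English description precedes it below -/
import Mathlib

section
/- The binary Fibonacci sequence fib = f^∞(0), where f(0) = 01 and f(1) = 0 on the alphabet {0,1}, is not ultimately periodic. -/
/-!
Let `Z n` be the number of zeros among the first `n` letters. Every block `fibMor a` contains
exactly one `0` and has length `1 + [a = 0]`, so the image of the first `k` letters has length
`k + Z k` and contains `k` zeros; as it is a prefix of the fixed point, `Z (k + Z k) = k`.
If the sequence had period `p` with `a` zeros per period, `p * Z n - a * n` would be bounded,
and evaluating it at `k` and `k + Z k` bounds `k * (p² - a p - a²)` uniformly in `k`.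
Hence `p² = a p + a²`, making the rational number `p / a` the golden ratio.
-/

/-- Applying a morphism `f : Γ → Γ⁺` to an infinite sequence `σ`. -/
def seqFlat {Γ : Type*} (f : Γ → List Γ) (σ : ℕ → Γ) (n : ℕ) : Γ :=
  (((List.range (n + 1)).flatMap fun i => f (σ i)).getD n (σ 0))

/-- The Fibonacci morphism `f 0 = 01`, `f 1 = 0` on `{0,1}`. -/
def fibMor : ℕ → List ℕ := fun n => if n = 0 then [0, 1] else [0]

open Nat (count count_succ)
open Real (goldenRatio goldenConj)

section Morphism

variable {Γ : Type*} (f : Γ → List Γ) (σ : ℕ → Γ)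

def prefixImage (k : ℕ) : List Γ := (List.range k).flatMap fun i => f (σ i)

lemma prefixImage_succ (k : ℕ) : prefixImage f σ (k + 1) = prefixImage f σ k ++ f (σ k) := by
  simp [prefixImage, List.range_succ]

lemma prefixImage_isPrefix_of_le {j k : ℕ} (h : j ≤ k) :
    prefixImage f σ j <+: prefixImage f σ k := by
  induction k, h using Nat.le_induction with
  | base => exact List.prefix_refl _
  | succ k _ ih => exact prefixImage_succ f σ k ▸ ih.trans (List.prefix_append _ _)

variable {f}

lemma le_length_prefixImage (hf : ∀ a, f a ≠ []) (k : ℕ) :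
    k ≤ (prefixImage f σ k).length := by
  induction k with
  | zero => simp
  | succ k ih =>
    have := List.length_pos_iff.2 (hf (σ k))
    rw [prefixImage_succ, List.length_append]
    omega

lemma seqFlat_eq_getElem_prefixImage (hf : ∀ a, f a ≠ []) {k m : ℕ}
    (hm : m < (prefixImage f σ k).length) : seqFlat f σ m = (prefixImage f σ k)[m] := by
  have hm' : m < (prefixImage f σ (m + 1)).length := le_length_prefixImage σ hf _
  rw [show seqFlat f σ m = (prefixImage f σ (m + 1))[m] from List.getD_eq_getElem _ _ hm']
  rcases le_total (m + 1) k with h | h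
  · exact (prefixImage_isPrefix_of_le f σ h).getElem hm'
  · exact ((prefixImage_isPrefix_of_le f σ h).getElem hm).symm

lemma map_range_length_prefixImage (hf : ∀ a, f a ≠ []) (hfix : seqFlat f σ = σ) (k : ℕ) :
    (List.range (prefixImage f σ k).length).map σ = prefixImage f σ k :=
  List.ext_getElem (by simp) fun m hm _ => by
    simp [← seqFlat_eq_getElem_prefixImage σ hf (k := k) (by simpa using hm), hfix]

lemma count_length_prefixImage [DecidableEq Γ] (hf : ∀ a, f a ≠ []) (hfix : seqFlat f σ = σ)
    (a : Γ) (k : ℕ) :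
    count (σ · = a) (prefixImage f σ k).length = (prefixImage f σ k).count a := by
  conv_rhs => rw [← map_range_length_prefixImage σ hf hfix]
  simp [count, List.count, List.countP_map, Function.comp_def, beq_eq_decide]

end Morphism

section Fibonacci

variable (σ : ℕ → ℕ)

lemma fibMor_ne_nil (a : ℕ) : fibMor a ≠ [] := by
  unfold fibMor; split <;> simp

lemma count_zero_fibMor (a : ℕ) : (fibMor a).count 0 = 1 := by
  unfold fibMor; split <;> simp

lemma length_fibMor (a : ℕ) : (fibMor a).length = 1 + if a = 0 then 1 else 0 := by
  unfold fibMor; split <;> simp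

lemma count_zero_prefixImage_fibMor (k : ℕ) : (prefixImage fibMor σ k).count 0 = k := by
  induction k with
  | zero => simp [prefixImage]
  | succ k ih => rw [prefixImage_succ, List.count_append, ih, count_zero_fibMor]

lemma length_prefixImage_fibMor (k : ℕ) :
    (prefixImage fibMor σ k).length = k + count (σ · = 0) k := by
  induction k with
  | zero => simp [prefixImage]
  | succ k ih =>
    rw [prefixImage_succ, List.length_append, ih, length_fibMor, count_succ]
    ring

theorem count_zero_add_count_zero_of_seqFlat_eq (hfix : seqFlat fibMor σ = σ) (k : ℕ) :
    count (σ · = 0) (k + count (σ · = 0) k) = k := by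
  rw [← length_prefixImage_fibMor, count_length_prefixImage σ fibMor_ne_nil hfix,
    count_zero_prefixImage_fibMor]

end Fibonacci

lemma exists_count_add_eq_of_eventually_periodic {P : ℕ → Prop} [DecidablePred P] {N p : ℕ}
    (hP : ∀ n, N ≤ n → (P (n + p) ↔ P n)) :
    ∃ a, ∀ n, N ≤ n → count P (n + p) = count P n + a := by
  refine ⟨count P (N + p) - count P N, fun n hn => ?_⟩
  induction n, hn using Nat.le_induction with
  | base => have := Nat.count_monotone P (N.le_add_right p); omega
  | succ n hn ih =>
    rw [add_right_comm, count_succ, ih, count_succ, if_congr (hP n hn) rfl rfl]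
    ring

lemma finite_range_of_eventually_periodic {α : Type*} {g : ℕ → α} {N p : ℕ} (hp : 1 ≤ p)
    (hg : ∀ n, N ≤ n → g (n + p) = g n) : (Set.range g).Finite := by
  have : ∀ n, g n ∈ g '' Set.Iio (N + p) := by
    intro n
    induction n using Nat.strong_induction_on with
    | _ n ih =>
      by_cases hn : n < N + p
      · exact ⟨n, hn, rfl⟩
      · obtain ⟨m, rfl⟩ : ∃ m, n = m + p := ⟨n - p, by omega⟩
        rw [hg m (by omega)]
        exact ih m (by omega)
  exact ((Set.finite_Iio _).image g).subset (Set.range_subset_iff.2 this)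

lemma exists_abs_mul_count_sub_le {P : ℕ → Prop} [DecidablePred P] {N p : ℕ} (hp : 1 ≤ p)
    (hP : ∀ n, N ≤ n → (P (n + p) ↔ P n)) :
    ∃ a : ℕ, ∃ C : ℤ, ∀ n, |(p : ℤ) * count P n - a * n| ≤ C := by
  obtain ⟨a, ha⟩ := exists_count_add_eq_of_eventually_periodic hP
  have hg := finite_range_of_eventually_periodic (N := N)
    (g := fun n ↦ |(p : ℤ) * count P n - a * n|) hp
    fun n hn ↦ by simp only [ha n hn]; push_cast; ring_nf
  obtain ⟨C, hC⟩ := hg.bddAbove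
  exact ⟨a, C, fun n => hC ⟨n, rfl⟩⟩

lemma eq_zero_of_forall_abs_natCast_mul_le {D C : ℤ} (h : ∀ k : ℕ, |(k : ℤ) * D| ≤ C) :
    D = 0 := by
  by_contra hD
  have h1 := Int.one_le_abs hD
  have h2 := h (C.toNat + 1)
  rw [abs_mul, Nat.abs_cast] at h2
  push_cast at h2
  nlinarith [Int.self_le_toNat C]

lemma sq_ne_mul_add_sq {p a : ℕ} (hp : p ≠ 0) : p ^ 2 ≠ a * p + a ^ 2 := by
  intro h
  have ha : a ≠ 0 := by rintro rfl; simp_all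
  set x : ℝ := p / a with hx
  have hx2 : x ^ 2 = x + 1 := by
    have h' : (p : ℝ) ^ 2 = a * p + a ^ 2 := by exact_mod_cast h
    rw [hx]
    field_simp
    linear_combination h'
  have hxφ : x = goldenRatio := by
    have hroots : (x - goldenRatio) * (x - goldenConj) = 0 := by
      linear_combination hx2 - x * Real.goldenRatio_add_goldenConj + Real.goldenRatio_mul_goldenConj
    have hψ : 0 < x - goldenConj := by
      linarith [Real.goldenConj_neg, (by positivity : (0 : ℝ) ≤ x)]
    rcases mul_eq_zero.1 hroots with h | h <;> linarith
  exact Real.goldenRatio_irrational ⟨p / a, by simp [← hxφ, hx]⟩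

theorem fib_not_ultimately_periodic_general (σ : ℕ → ℕ)
    (hfix : seqFlat fibMor σ = σ) :
    ¬ ∃ (N p : ℕ), 1 ≤ p ∧ ∀ n, N ≤ n → σ (n + p) = σ n := by
  rintro ⟨N, p, hp, hper⟩
  obtain ⟨a, C, hC⟩ :=
    exists_abs_mul_count_sub_le (P := (σ · = 0)) hp fun n hn => by rw [hper n hn]
  set Z := count (σ · = 0)
  apply sq_ne_mul_add_sq (a := a) (by omega : p ≠ 0)
  suffices (p : ℤ) ^ 2 - a * p - a ^ 2 = 0 by zify; linear_combination this
  refine eq_zero_of_forall_abs_natCast_mul_le (C := p * C + a * C) fun k => ?_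
  have hL : Z (k + Z k) = k := count_zero_add_count_zero_of_seqFlat_eq σ hfix k
  calc |(k : ℤ) * (p ^ 2 - a * p - a ^ 2)|
      = |p * ((p : ℤ) * Z (k + Z k) - a * ↑(k + Z k)) + a * ((p : ℤ) * Z k - a * k)| := by
        rw [hL]; push_cast; ring_nf
    _ ≤ p * |(p : ℤ) * Z (k + Z k) - a * ↑(k + Z k)| + a * |(p : ℤ) * Z k - a * k| := by
        refine (abs_add_le _ _).trans_eq ?_
        rw [abs_mul, abs_mul, Nat.abs_cast, Nat.abs_cast]
    _ ≤ p * C + a * C := by gcongr <;> exact hC _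

/-- The binary Fibonacci sequence `fib = f^∞(0)` is not ultimately periodic. -/
theorem fib_not_ultimately_periodic (σ : ℕ → ℕ) (hσ0 : σ 0 = 0)
    (hfix : seqFlat fibMor σ = σ) :
    ¬ ∃ (N p : ℕ), 1 ≤ p ∧ ∀ n, N ≤ n → σ (n + p) = σ n :=
  fib_not_ultimately_periodic_general σ hfix
end

section
/- Let σ be a morphic sequence over a finite alphabet Σ. Then there exist a rational tree function P : ℕ⁺ → ℕ such that the set { σ^{S_P(n)} | n ∈ ℕ } of subsequences of σ is finite, where S_P(n) = { m ∈ ℕ | ∃k, P^k(m) = n } and σ^S denotes the subsequence of σ indexed by the elements of the infinite set S in increasing order. -/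
/-- `SP P n = { m | ∃ k, P^k(m) = n }`: the set of descendants of `n` in the tree
defined by the parent function `P`. -/
def SP (P : ℕ → ℕ) (n : ℕ) : Set ℕ := {m | ∃ k : ℕ, P^[k] m = n}

/-- The (ordered) subtrees of the tree of `P` rooted at `m` and at `n` are equal:
there is a strictly monotone bijection between the descendant sets mapping `m` to `n`
and commuting with the parent function. -/
def treeEquiv (P : ℕ → ℕ) (m n : ℕ) : Prop :=
  ∃ φ : ℕ → ℕ, Set.BijOn φ (SP P m) (SP P n) ∧ StrictMonoOn φ (SP P m) ∧
    φ m = n ∧ ∀ x ∈ SP P m, x ≠ m → φ (P x) = P (φ x)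

/-- A tree function is rational if its tree has only finitely many distinct subtrees. -/
def RationalTree (P : ℕ → ℕ) : Prop :=
  ∃ F : Finset ℕ, ∀ n : ℕ, ∃ m ∈ F, treeEquiv P m n

/-- The subsequence `σ^S` of `σ` given by the increasing enumeration of `S`. -/
noncomputable def subseq {A : Type*} (σ : ℕ → A) (S : Set ℕ) (i : ℕ) : A :=
  σ (Nat.nth (· ∈ S) i)

theorem GaloisConnection.u_eq_iff_of_nat {l u : ℕ → ℕ} (gc : GaloisConnection l u)
    {x i : ℕ} : u x = i ↔ l i ≤ x ∧ x < l (i + 1) := by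
  rw [gc, ← not_le, gc]
  omega

theorem Nat.nth_eq_apply_nth_of_bijOn {S T : Set ℕ} (hS : S.Infinite) (hT : T.Infinite)
    {φ : ℕ → ℕ} (hφ : Set.BijOn φ S T) (hmono : StrictMonoOn φ S) (i : ℕ) :
    Nat.nth (· ∈ T) i = φ (Nat.nth (· ∈ S) i) := by
  have hφnth : StrictMono fun i => φ (Nat.nth (· ∈ S) i) := fun i j hij =>
    hmono (Nat.nth_mem_of_infinite hS i) (Nat.nth_mem_of_infinite hS j)
      (Nat.nth_strictMono hS hij)
  have hrange : Set.range (fun i => φ (Nat.nth (· ∈ S) i)) = Set.range (Nat.nth (· ∈ T)) := by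
    rw [Set.range_comp' φ, Nat.range_nth_of_infinite (p := (· ∈ S)) hS,
      Nat.range_nth_of_infinite (p := (· ∈ T)) hT]
    exact hφ.image_eq
  exact congrFun (((Nat.nth_strictMono hT).range_inj hφnth).1 hrange.symm) i

theorem subseq_eq_of_bijOn {A : Type*} {χ : ℕ → A} {S T : Set ℕ} (hS : S.Infinite)
    (hT : T.Infinite) {φ : ℕ → ℕ} (hφ : Set.BijOn φ S T) (hmono : StrictMonoOn φ S)
    (hχ : ∀ x ∈ S, χ (φ x) = χ x) : subseq χ T = subseq χ S := by
  funext i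
  rw [subseq, subseq, Nat.nth_eq_apply_nth_of_bijOn hS hT hφ hmono,
    hχ _ (Nat.nth_mem_of_infinite (p := (· ∈ S)) hS i)]

theorem treeEquiv_refl (P : ℕ → ℕ) (n : ℕ) : treeEquiv P n n :=
  ⟨id, Set.bijOn_id _, strictMonoOn_id, rfl, fun _ _ _ => rfl⟩

theorem rationalTree_of_classes {α : Type*} [Fintype α] (P : ℕ → ℕ) (c : ℕ → α)
    (h : ∀ m n, c m = c n → treeEquiv P m n) : RationalTree P :=
  ⟨Finset.univ.image (Function.invFun c), fun n =>
    ⟨_, Finset.mem_image_of_mem _ (Finset.mem_univ (c n)),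
      h _ _ (Function.invFun_eq ⟨n, rfl⟩)⟩⟩

theorem Set.finite_range_of_classes {ι α β : Type*} [Nonempty ι] [Finite α] (g : ι → β)
    (c : ι → α) (h : ∀ i j, c i = c j → g i = g j) : (Set.range g).Finite :=
  (Set.finite_range (g ∘ Function.invFun c)).subset <| by
    rintro _ ⟨i, rfl⟩
    exact ⟨c i, h _ _ (Function.invFun_eq ⟨i, rfl⟩)⟩

def slice {α : Type*} (χ : ℕ → α) (a c : ℕ) : List α := ((List.range c).map χ).drop a

section Slice

variable {α β : Type*} (χ : ℕ → α) (a c : ℕ)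

theorem length_slice : (slice χ a c).length = c - a := by simp [slice]

theorem getElem_slice {t : ℕ} (ht : t < (slice χ a c).length) :
    (slice χ a c)[t] = χ (a + t) := by
  simp [slice]

theorem slice_comp (g : α → β) : slice (g ∘ χ) a c = (slice χ a c).map g := by
  simp [slice, List.map_drop]

theorem slice_succ : slice χ a (a + 1) = [χ a] := by
  rw [slice, List.range_succ, List.map_append, List.drop_left' (by simp)]
  rfl

end Slice

namespace BlockTree

variable (ℓ : ℕ → ℕ)

/- The positions are cut into consecutive blocks, block `i` having length `ℓ i` and starting at
`start ℓ i`; the nodes of block `i` are the children of `i`. -/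
def start (i : ℕ) : ℕ := ∑ j ∈ Finset.range i, ℓ j

def parent (x : ℕ) : ℕ := Nat.findGreatest (fun i => start ℓ i ≤ x) x

def levelWord {α : Type*} (χ : ℕ → α) (k n : ℕ) : List α :=
  slice χ ((start ℓ)^[k] n) ((start ℓ)^[k] (n + 1))

open Classical in
noncomputable def subtreeMap (m n x : ℕ) : ℕ :=
  if h : ∃ k, (parent ℓ)^[k] x = m then
    (start ℓ)^[Nat.find h] n + (x - (start ℓ)^[Nat.find h] m)
  else x

variable {ℓ}

theorem start_succ (i : ℕ) : start ℓ (i + 1) = start ℓ i + ℓ i := Finset.sum_range_succ ..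

theorem start_add (L s : ℕ) : start ℓ (L + s) = start ℓ L + ∑ j ∈ Finset.range s, ℓ (L + j) :=
  Finset.sum_range_add ..

theorem parent_zero : parent ℓ 0 = 0 := rfl

theorem iterate_parent_le (k x : ℕ) : (parent ℓ)^[k] x ≤ x :=
  Function.iterate_le_id_of_le_id (fun y => Nat.findGreatest_le y) k x

theorem length_levelWord {α : Type*} (χ : ℕ → α) (k n : ℕ) :
    (levelWord ℓ χ k n).length = (start ℓ)^[k] (n + 1) - (start ℓ)^[k] n :=
  length_slice ..

theorem levelWord_comp {α β : Type*} (g : α → β) (χ : ℕ → α) (k n : ℕ) :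
    levelWord ℓ (g ∘ χ) k n = (levelWord ℓ χ k n).map g :=
  slice_comp ..

theorem width_eq_of_levelWord_eq {α : Type*} {χ : ℕ → α} {k m n : ℕ}
    (h : levelWord ℓ χ k m = levelWord ℓ χ k n) :
    (start ℓ)^[k] (m + 1) - (start ℓ)^[k] m = (start ℓ)^[k] (n + 1) - (start ℓ)^[k] n := by
  simpa only [length_levelWord] using congrArg List.length h

theorem apply_eq_of_levelWord_eq {α : Type*} {χ : ℕ → α} {k m n : ℕ}
    (h : levelWord ℓ χ k m = levelWord ℓ χ k n) {j : ℕ}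
    (hj : j < (start ℓ)^[k] (m + 1) - (start ℓ)^[k] m) :
    χ ((start ℓ)^[k] m + j) = χ ((start ℓ)^[k] n + j) := by
  rw [← length_levelWord χ] at hj
  rw [← getElem_slice χ _ _ hj, ← getElem_slice χ _ _ (h ▸ hj)]
  exact List.getElem_of_eq h hj

section Positive

variable (hℓ : ∀ i, 1 ≤ ℓ i)
include hℓ

theorem start_strictMono : StrictMono (start ℓ) :=
  strictMono_nat_of_lt_succ fun i => by rw [start_succ]; have := hℓ i; omega

theorem le_start (i : ℕ) : i ≤ start ℓ i := (start_strictMono hℓ).id_le i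

theorem gc_start_parent : GaloisConnection (start ℓ) (parent ℓ) := fun i x =>
  ⟨fun h => Nat.le_findGreatest ((le_start hℓ i).trans h) h,
    fun h => ((start_strictMono hℓ).monotone h).trans
      (Nat.findGreatest_spec (P := fun i => start ℓ i ≤ x) (Nat.zero_le x)
        (by simp [start]))⟩

theorem gc_iterate_start_parent (k : ℕ) : GaloisConnection (start ℓ)^[k] (parent ℓ)^[k] := by
  induction k with
  | zero => exact GaloisConnection.id
  | succ k ih =>
    rw [Function.iterate_succ', Function.iterate_succ]
    exact ih.compose (gc_start_parent hℓ)

theorem parent_eq_iff {x i : ℕ} : parent ℓ x = i ↔ start ℓ i ≤ x ∧ x < start ℓ (i + 1) :=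
  (gc_start_parent hℓ).u_eq_iff_of_nat

theorem iterate_parent_eq_iff {k x n : ℕ} :
    (parent ℓ)^[k] x = n ↔ (start ℓ)^[k] n ≤ x ∧ x < (start ℓ)^[k] (n + 1) :=
  (gc_iterate_start_parent hℓ k).u_eq_iff_of_nat

theorem parent_shift {L L' d x : ℕ} (hlen : ∀ j < d, ℓ (L + j) = ℓ (L' + j))
    (hx : start ℓ L ≤ x) (hx' : x < start ℓ (L + d)) :
    parent ℓ (start ℓ L' + (x - start ℓ L)) = L' + (parent ℓ x - L) := by
  have hsum : ∀ s ≤ d, start ℓ (L' + s) + start ℓ L = start ℓ (L + s) + start ℓ L' := by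
    intro s hs
    rw [start_add, start_add,
      Finset.sum_congr rfl fun j hj => hlen j ((Finset.mem_range.1 hj).trans_le hs)]
    omega
  have hi := (parent_eq_iff hℓ).1 (rfl : parent ℓ x = parent ℓ x)
  have hLi : L ≤ parent ℓ x := (gc_start_parent hℓ).le_iff_le.1 hx
  have hiL : parent ℓ x < L + d := (gc_start_parent hℓ).lt_iff_lt.1 hx'
  generalize parent ℓ x = i at *
  have h1 := hsum (i - L) (by omega)
  have h2 := hsum (i - L + 1) (by omega)
  rw [show L + (i - L) = i by omega] at h1
  rw [show L + (i - L + 1) = i + 1 by omega] at h2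
  have hstart := (start_strictMono hℓ).monotone hLi
  rw [parent_eq_iff hℓ, add_assoc]
  omega

end Positive

section Tree

variable (hℓ : ∀ i, 1 ≤ ℓ i) (hℓ0 : 2 ≤ ℓ 0)
include hℓ hℓ0

theorem lt_start {i : ℕ} (hi : 1 ≤ i) : i < start ℓ i := by
  induction i, hi using Nat.le_induction with
  | base => simp [start]; omega
  | succ i _ ih => rw [start_succ]; have := hℓ i; omega

theorem parent_lt {x : ℕ} (hx : 1 ≤ x) : parent ℓ x < x :=
  (gc_start_parent hℓ).lt_iff_lt.1 (lt_start hℓ hℓ0 hx)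

theorem exists_parent_eq (m : ℕ) : ∃ n, 1 ≤ n ∧ parent ℓ n = m := by
  have h1 := lt_start hℓ hℓ0 (i := m + 1) (by omega)
  have h2 := start_succ (ℓ := ℓ) m
  have h3 := hℓ m
  exact ⟨start ℓ (m + 1) - 1, by omega, (parent_eq_iff hℓ).2 ⟨by omega, by omega⟩⟩

theorem depth_unique {m x k k' : ℕ} (hm : 1 ≤ m) (hk : (parent ℓ)^[k] x = m)
    (hk' : (parent ℓ)^[k'] x = m) : k = k' := by
  wlog h : k ≤ k' generalizing k k'
  · exact (this hk' hk (le_of_not_ge h)).symm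
  by_contra hne
  obtain ⟨j, hj⟩ : ∃ j, k' - k = j + 1 := ⟨k' - k - 1, by omega⟩
  have hcycle : (parent ℓ)^[k' - k] m = m := by
    rw [← hk, ← Function.iterate_add_apply, Nat.sub_add_cancel h, hk', hk]
  rw [hj, Function.iterate_succ_apply] at hcycle
  have := (iterate_parent_le (ℓ := ℓ) j (parent ℓ m)).trans_lt (parent_lt hℓ hℓ0 hm)
  omega

theorem iterate_start_succ_le {n : ℕ} (hn : 1 ≤ n) {k k' : ℕ} (hk : k < k') :
    (start ℓ)^[k] (n + 1) ≤ (start ℓ)^[k'] n :=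
  calc (start ℓ)^[k] (n + 1)
      ≤ (start ℓ)^[k] (start ℓ n) :=
        (start_strictMono hℓ).monotone.iterate k (lt_start hℓ hℓ0 hn)
    _ = (start ℓ)^[k + 1] n := (Function.iterate_succ_apply ..).symm
    _ ≤ (start ℓ)^[k'] n := Function.monotone_iterate_of_id_le (le_start hℓ) hk n

theorem SP_infinite {n : ℕ} (hn : 1 ≤ n) : (SP (parent ℓ) n).Infinite := by
  refine Set.infinite_of_injective_forall_mem (f := fun k => (start ℓ)^[k] n) ?_ fun k => ?_
  · refine (strictMono_nat_of_lt_succ fun k => ?_).injective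
    exact ((start_strictMono hℓ).iterate k n.lt_succ_self).trans_le
      (iterate_start_succ_le hℓ hℓ0 hn k.lt_succ_self)
  · exact ⟨k, (iterate_parent_eq_iff hℓ).2
      ⟨le_rfl, (start_strictMono hℓ).iterate k n.lt_succ_self⟩⟩

end Tree

section Subtree

variable (hℓ : ∀ i, 1 ≤ ℓ i) (hℓ0 : 2 ≤ ℓ 0) {m n : ℕ} (hm : 1 ≤ m)
include hℓ hℓ0 hm

theorem subtreeMap_apply {k x : ℕ} (hk : (parent ℓ)^[k] x = m) :
    subtreeMap ℓ m n x = (start ℓ)^[k] n + (x - (start ℓ)^[k] m) := by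
  have h : ∃ k, (parent ℓ)^[k] x = m := ⟨k, hk⟩
  rw [subtreeMap, dif_pos h, depth_unique hℓ hℓ0 hm (Nat.find_spec h) hk]

theorem subtreeMap_self : subtreeMap ℓ m n m = n := by
  simp [subtreeMap_apply hℓ hℓ0 hm (k := 0) rfl]

theorem apply_subtreeMap {α : Type*} {χ : ℕ → α}
    (hχ : ∀ k, levelWord ℓ χ k m = levelWord ℓ χ k n) {x : ℕ} (hx : x ∈ SP (parent ℓ) m) :
    χ (subtreeMap ℓ m n x) = χ x := by
  obtain ⟨k, hk⟩ := hx
  have hb := (iterate_parent_eq_iff hℓ).1 hk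
  rw [subtreeMap_apply hℓ hℓ0 hm hk, ← apply_eq_of_levelWord_eq (hχ k) (by omega),
    Nat.add_sub_cancel' hb.1]

section Width

variable (hwidth : ∀ k,
  (start ℓ)^[k] (m + 1) - (start ℓ)^[k] m = (start ℓ)^[k] (n + 1) - (start ℓ)^[k] n)
include hwidth

theorem iterate_parent_subtreeMap {k x : ℕ} (hk : (parent ℓ)^[k] x = m) :
    (parent ℓ)^[k] (subtreeMap ℓ m n x) = n := by
  have hb := (iterate_parent_eq_iff hℓ).1 hk
  have hw := hwidth k
  rw [iterate_parent_eq_iff hℓ, subtreeMap_apply hℓ hℓ0 hm hk]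
  omega

theorem mapsTo_subtreeMap :
    Set.MapsTo (subtreeMap ℓ m n) (SP (parent ℓ) m) (SP (parent ℓ) n) :=
  fun _ ⟨k, hk⟩ => ⟨k, iterate_parent_subtreeMap hℓ hℓ0 hm hwidth hk⟩

theorem leftInvOn_subtreeMap (hn : 1 ≤ n) :
    Set.LeftInvOn (subtreeMap ℓ n m) (subtreeMap ℓ m n) (SP (parent ℓ) m) := by
  rintro x ⟨k, hk⟩
  have hb := (iterate_parent_eq_iff hℓ).1 hk
  have hw := hwidth k
  rw [subtreeMap_apply hℓ hℓ0 hn (iterate_parent_subtreeMap hℓ hℓ0 hm hwidth hk),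
    subtreeMap_apply hℓ hℓ0 hm hk]
  omega

theorem bijOn_subtreeMap (hn : 1 ≤ n) :
    Set.BijOn (subtreeMap ℓ m n) (SP (parent ℓ) m) (SP (parent ℓ) n) :=
  Set.InvOn.bijOn
    ⟨leftInvOn_subtreeMap hℓ hℓ0 hm hwidth hn,
      leftInvOn_subtreeMap hℓ hℓ0 hn (fun k => (hwidth k).symm) hm⟩
    (mapsTo_subtreeMap hℓ hℓ0 hm hwidth)
    (mapsTo_subtreeMap hℓ hℓ0 hn fun k => (hwidth k).symm)

theorem strictMonoOn_subtreeMap (hn : 1 ≤ n) :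
    StrictMonoOn (subtreeMap ℓ m n) (SP (parent ℓ) m) := by
  rintro x ⟨k, hk⟩ y ⟨k', hk'⟩ hxy
  have hx := (iterate_parent_eq_iff hℓ).1 hk
  have hy := (iterate_parent_eq_iff hℓ).1 hk'
  have hφx := (iterate_parent_eq_iff hℓ).1 (iterate_parent_subtreeMap hℓ hℓ0 hm hwidth hk)
  have hφy := (iterate_parent_eq_iff hℓ).1 (iterate_parent_subtreeMap hℓ hℓ0 hm hwidth hk')
  rcases lt_trichotomy k k' with hlt | rfl | hgt
  · have := iterate_start_succ_le hℓ hℓ0 hn hlt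
    omega
  · rw [subtreeMap_apply hℓ hℓ0 hm hk, subtreeMap_apply hℓ hℓ0 hm hk']
    omega
  · have := iterate_start_succ_le hℓ hℓ0 hm hgt
    omega

end Width

theorem subtreeMap_parent
    (hlen : ∀ k, ∀ j < (start ℓ)^[k] (m + 1) - (start ℓ)^[k] m,
      ℓ ((start ℓ)^[k] m + j) = ℓ ((start ℓ)^[k] n + j))
    {x : ℕ} (hx : x ∈ SP (parent ℓ) m) (hxm : x ≠ m) :
    subtreeMap ℓ m n (parent ℓ x) = parent ℓ (subtreeMap ℓ m n x) := by
  obtain ⟨k, hk⟩ := hx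
  cases k with
  | zero => exact absurd hk hxm
  | succ k =>
    have hPx : (parent ℓ)^[k] (parent ℓ x) = m := by rwa [← Function.iterate_succ_apply]
    have hb := (iterate_parent_eq_iff hℓ).1 hk
    simp only [Function.iterate_succ_apply'] at hb
    have hmono : (start ℓ)^[k] m ≤ (start ℓ)^[k] (m + 1) :=
      (start_strictMono hℓ).monotone.iterate k m.le_succ
    rw [subtreeMap_apply hℓ hℓ0 hm hk, subtreeMap_apply hℓ hℓ0 hm hPx,
      Function.iterate_succ_apply' _ k n, Function.iterate_succ_apply' _ k m]
    refine (parent_shift hℓ (hlen k) hb.1 ?_).symm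
    rw [Nat.add_sub_cancel' hmono]
    exact hb.2

theorem treeEquiv_of_levelWord_eq (hn : 1 ≤ n)
    (hlev : ∀ k, levelWord ℓ ℓ k m = levelWord ℓ ℓ k n) : treeEquiv (parent ℓ) m n :=
  have hwidth k := width_eq_of_levelWord_eq (hlev k)
  ⟨subtreeMap ℓ m n, bijOn_subtreeMap hℓ hℓ0 hm hwidth hn,
    strictMonoOn_subtreeMap hℓ hℓ0 hm hwidth hn, subtreeMap_self hℓ hℓ0 hm,
    fun _ hx hxm => subtreeMap_parent hℓ hℓ0 hm
      (fun k _ hj => apply_eq_of_levelWord_eq (hlev k) hj) hx hxm⟩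

theorem subseq_SP_eq_of_levelWord_eq {α : Type*} {χ : ℕ → α} (hn : 1 ≤ n)
    (hlev : ∀ k, levelWord ℓ ℓ k m = levelWord ℓ ℓ k n)
    (hχ : ∀ k, levelWord ℓ χ k m = levelWord ℓ χ k n) :
    subseq χ (SP (parent ℓ) m) = subseq χ (SP (parent ℓ) n) :=
  have hwidth k := width_eq_of_levelWord_eq (hlev k)
  (subseq_eq_of_bijOn (SP_infinite hℓ hℓ0 hm) (SP_infinite hℓ hℓ0 hn)
    (bijOn_subtreeMap hℓ hℓ0 hm hwidth hn) (strictMonoOn_subtreeMap hℓ hℓ0 hm hwidth hn)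
    fun _ hx => apply_subtreeMap hℓ hℓ0 hm hχ hx).symm

end Subtree

end BlockTree

section Morphic

open BlockTree

variable {Γ : Type*} (f : Γ → List Γ) (σ : ℕ → Γ)

def blockLength (i : ℕ) : ℕ := (f (σ i)).length

theorem length_flatMap_map_range (N : ℕ) :
    (((List.range N).map σ).flatMap f).length = start (blockLength f σ) N := by
  induction N with
  | zero => rfl
  | succ N ih =>
    rw [List.range_succ, List.map_append, List.flatMap_append, List.length_append, ih, start_succ]
    simp [blockLength]

theorem flatMap_map_range_prefix {N M : ℕ} (h : N ≤ M) :
    ((List.range N).map σ).flatMap f <+: ((List.range M).map σ).flatMap f := by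
  obtain ⟨d, rfl⟩ := Nat.exists_eq_add_of_le h
  rw [List.range_add, List.map_append]
  exact (List.prefix_append _ _).flatMap f

variable (hfix : seqFlat f σ = σ) (hℓ : ∀ i, 1 ≤ blockLength f σ i)
include hfix hℓ

theorem map_range_start_eq_flatMap (N : ℕ) :
    (List.range (start (blockLength f σ) N)).map σ = ((List.range N).map σ).flatMap f := by
  refine List.ext_getElem
    (by rw [List.length_map, List.length_range, length_flatMap_map_range]) fun x hx _ => ?_
  have hσx : σ x = (((List.range (x + 1)).map σ).flatMap f).getD x (σ 0) := by
    conv_lhs => rw [← hfix]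
    rw [List.flatMap_map]
    rfl
  have hx' : x < (((List.range (x + 1)).map σ).flatMap f).length := by
    rw [length_flatMap_map_range]
    exact Nat.lt_of_lt_of_le x.lt_succ_self (le_start hℓ _)
  rw [List.getElem_map, List.getElem_range, hσx, List.getD_eq_getElem _ _ hx']
  exact ((flatMap_map_range_prefix f σ (le_max_right N (x + 1))).getElem hx').trans
    ((flatMap_map_range_prefix f σ (le_max_left N (x + 1))).getElem _).symm

theorem slice_start {L M : ℕ} (hLM : L ≤ M) :
    slice σ (start (blockLength f σ) L) (start (blockLength f σ) M) =
      (slice σ L M).flatMap f := by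
  have hsplit : (List.range L).map σ ++ slice σ L M = (List.range M).map σ :=
    calc (List.range L).map σ ++ slice σ L M
        = ((List.range M).map σ).take L ++ ((List.range M).map σ).drop L := by
          rw [← List.map_take, List.take_range, min_eq_left hLM]
          rfl
      _ = (List.range M).map σ := List.take_append_drop ..
  rw [slice, map_range_start_eq_flatMap f σ hfix hℓ, ← hsplit, List.flatMap_append,
    List.drop_left' (length_flatMap_map_range f σ L)]

theorem levelWord_eq_iterate (k n : ℕ) :
    levelWord (blockLength f σ) σ k n = (fun w => w.flatMap f)^[k] [σ n] := by
  induction k with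
  | zero => exact slice_succ σ n
  | succ k ih =>
    simp only [levelWord, Function.iterate_succ_apply']
    rw [slice_start f σ hfix hℓ ((start_strictMono hℓ).monotone.iterate k n.le_succ), ← ih]
    rfl

theorem levelWord_comp_eq_of_apply_eq {β : Type*} (g : Γ → β) {m n : ℕ} (h : σ m = σ n)
    (k : ℕ) :
    levelWord (blockLength f σ) (g ∘ σ) k m = levelWord (blockLength f σ) (g ∘ σ) k n := by
  rw [levelWord_comp, levelWord_comp, levelWord_eq_iterate f σ hfix hℓ,
    levelWord_eq_iterate f σ hfix hℓ, h]

end Morphic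

open BlockTree

theorem morphic_finitely_many_subsequences_general {A Γ : Type} [Fintype Γ]
    (f : Γ → List Γ) (τ : Γ → A) (a : Γ) (u : List Γ)
    (hne : ∀ b : Γ, f b ≠ []) (hu : u ≠ []) (hfa : f a = a :: u)
    (σΓ : ℕ → Γ) (hσ0 : σΓ 0 = a) (hfix : seqFlat f σΓ = σΓ)
    (σ : ℕ → A) (hσ : σ = fun n => τ (σΓ n)) :
    ∃ P : ℕ → ℕ, P 0 = 0 ∧
      (∀ n, 1 ≤ n → P n ≤ P (n + 1)) ∧
      (∀ m : ℕ, ∃ n, 1 ≤ n ∧ P n = m) ∧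
      RationalTree P ∧
      (Set.range fun n : ℕ => subseq σ (SP P n)).Finite := by
  subst hσ
  set ℓ := blockLength f σΓ
  have hℓ : ∀ i, 1 ≤ ℓ i := fun i => List.length_pos_iff.2 (hne _)
  have hℓ0 : 2 ≤ ℓ 0 := by
    have := List.length_pos_iff.2 hu
    simp only [ℓ, blockLength, hσ0, hfa, List.length_cons]
    omega
  have hlev {β : Type} (g : Γ → β) {m n : ℕ} (h : σΓ m = σΓ n) :=
    levelWord_comp_eq_of_apply_eq f σΓ hfix hℓ g h
  -- the root is its own parent, so its subtree is unlike any other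
  let c : ℕ → Option Γ := fun n => if n = 0 then none else some (σΓ n)
  have hc {m n : ℕ} (h : c m = c n) : m = n ∨ 1 ≤ m ∧ 1 ≤ n ∧ σΓ m = σΓ n := by
    simp only [c] at h
    split_ifs at h <;> simp_all
    omega
  refine ⟨parent ℓ, parent_zero, fun n _ => (gc_start_parent hℓ).monotone_u n.le_succ,
    exists_parent_eq hℓ hℓ0, rationalTree_of_classes _ c fun m n h => ?_,
    Set.finite_range_of_classes _ c fun m n h => ?_⟩
  · rcases hc h with rfl | ⟨hm, hn, hmn⟩
    · exact treeEquiv_refl _ _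
    · exact treeEquiv_of_levelWord_eq hℓ hℓ0 hm hn (hlev (fun b => (f b).length) hmn)
  · rcases hc h with rfl | ⟨hm, hn, hmn⟩
    · rfl
    · exact subseq_SP_eq_of_levelWord_eq hℓ hℓ0 hm hn (hlev (fun b => (f b).length) hmn)
        (hlev τ hmn)

/-- Every morphic sequence `σ = τ(f^∞(a))` admits a rational tree function `P`
such that the set of subsequences `{ σ^{S_P(n)} | n ∈ ℕ }` is finite. -/
theorem morphic_finitely_many_subsequences {A Γ : Type} [Fintype A] [Fintype Γ]
    (f : Γ → List Γ) (τ : Γ → A) (a : Γ) (u : List Γ)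
    (hne : ∀ b : Γ, f b ≠ []) (hu : u ≠ []) (hfa : f a = a :: u)
    (σΓ : ℕ → Γ) (hσ0 : σΓ 0 = a) (hfix : seqFlat f σΓ = σΓ)
    (σ : ℕ → A) (hσ : σ = fun n => τ (σΓ n)) :
    ∃ P : ℕ → ℕ, P 0 = 0 ∧
      (∀ n, 1 ≤ n → P n ≤ P (n + 1)) ∧
      (∀ m : ℕ, ∃ n, 1 ≤ n ∧ P n = m) ∧
      RationalTree P ∧
      (Set.range fun n : ℕ => subseq σ (SP P n)).Finite :=
  morphic_finitely_many_subsequences_general f τ a u hne hu hfa σΓ hσ0 hfix σ hσ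
end

section
/- Let P : ℕ⁺ → ℕ be the tree function arising from a pure morphic sequence f^∞(a) over a finite alphabet Γ (the parent function of the morphic tree). Then P is rational: the tree on ℕ defined by P has only finitely many isomorphism classes of subtrees (at most |Γ| + 1 many). -/
/-- `treePR f σ n = (P (n+1), R (n+1))` for the morphic tree of `σ`. -/
def treePR {Γ : Type*} (f : Γ → List Γ) (σ : ℕ → Γ) : ℕ → ℕ × ℕ
  | 0 => (0, 1)
  | n + 1 =>
      if (treePR f σ n).2 + 1 < (f (σ (treePR f σ n).1)).length then
        ((treePR f σ n).1, (treePR f σ n).2 + 1)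
      else ((treePR f σ n).1 + 1, 0)

/-- The parent function `P : ℕ⁺ → ℕ` of the morphic tree. -/
def Pfun {Γ : Type*} (f : Γ → List Γ) (σ : ℕ → Γ) (n : ℕ) : ℕ := (treePR f σ (n - 1)).1

theorem exists_finset_card_le_forall_exists_eq {α β : Type*} [Nonempty α] [DecidableEq α]
    [Fintype β] (g : α → β) :
    ∃ F : Finset α, F.card ≤ Fintype.card β ∧ ∀ x, ∃ y ∈ F, g y = g x :=
  ⟨Finset.univ.image (Function.invFun g), Finset.card_image_le,
    fun x => ⟨_, Finset.mem_image_of_mem _ (Finset.mem_univ (g x)),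
      Function.invFun_eq ⟨x, rfl⟩⟩⟩

namespace MorphicTree

section Descendants

variable {P : ℕ → ℕ} {m : ℕ}

theorem mem_SP_self (P : ℕ → ℕ) (m : ℕ) : m ∈ SP P m := ⟨0, rfl⟩

theorem mem_SP_of_apply_mem {x : ℕ} (hx : P x ∈ SP P m) : x ∈ SP P m :=
  let ⟨k, hk⟩ := hx
  ⟨k + 1, hk⟩

theorem apply_mem_SP {x : ℕ} (hx : x ∈ SP P m) (hxm : x ≠ m) : P x ∈ SP P m := by
  obtain ⟨_ | k, hk⟩ := hx
  · exact absurd hk hxm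
  · exact ⟨k, hk⟩

theorem SP_induction {motive : ℕ → Prop} (root : motive m)
    (step : ∀ x ∈ SP P m, x ≠ m → motive (P x) → motive x) :
    ∀ x ∈ SP P m, motive x := by
  rintro x ⟨k, hk⟩
  induction k generalizing x with
  | zero => obtain rfl : x = m := hk; exact root
  | succ k ih =>
    by_cases hxm : x = m
    · exact hxm ▸ root
    · exact step x ⟨k + 1, hk⟩ hxm (ih (P x) hk)

theorem le_of_mem_SP (hP : ∀ x, P x ≤ x) : ∀ x ∈ SP P m, m ≤ x :=
  SP_induction le_rfl fun x _ _ ih => ih.trans (hP x)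

theorem treeEquiv_refl (P : ℕ → ℕ) (x : ℕ) : treeEquiv P x x :=
  ⟨id, Set.bijOn_id _, strictMonoOn_id, rfl, fun _ _ _ => rfl⟩

end Descendants

section Blocks

variable {Γ : Type*} (f : Γ → List Γ) (σ : ℕ → Γ)

theorem treePR_fst_le (n : ℕ) : (treePR f σ n).1 ≤ n := by
  induction n with
  | zero => simp [treePR]
  | succ n ih =>
    rw [treePR]
    split <;> simp only <;> omega

theorem Pfun_lt {x : ℕ} (hx : 0 < x) : Pfun f σ x < x :=
  (treePR_fst_le f σ (x - 1)).trans_lt (by omega)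

theorem Pfun_le (x : ℕ) : Pfun f σ x ≤ x := by
  rcases Nat.eq_zero_or_pos x with rfl | hx
  · exact le_rfl
  · exact (Pfun_lt f σ hx).le

def blockStart (p : ℕ) : ℕ := ∑ i ∈ Finset.range p, (f (σ i)).length

theorem blockStart_succ (p : ℕ) :
    blockStart f σ (p + 1) = blockStart f σ p + (f (σ p)).length :=
  Finset.sum_range_succ _ _

theorem length_flatMap_range (p : ℕ) :
    ((List.range p).flatMap fun i => f (σ i)).length = blockStart f σ p := by
  induction p with
  | zero => rfl
  | succ p ih =>
    rw [List.range_succ, List.flatMap_append, List.length_append, ih, blockStart_succ]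
    simp

variable {f σ} (hL : ∀ p, 0 < (f (σ p)).length)
include hL

theorem blockStart_strictMono : StrictMono (blockStart f σ) :=
  strictMono_nat_of_lt_succ fun p => by rw [blockStart_succ]; exact Nat.lt_add_of_pos_right (hL p)

theorem apply_blockStart_add (hfix : seqFlat f σ = σ) {p j : ℕ} (hj : j < (f (σ p)).length) :
    σ (blockStart f σ p + j) = (f (σ p)).getD j (σ 0) := by
  set x := blockStart f σ p + j
  have hpx : p ≤ x := (blockStart_strictMono hL).le_apply.trans (Nat.le_add_right _ _)
  have hsplit :
      List.range (x + 1) = List.range (p + 1) ++ (List.range (x - p)).map (p + 1 + ·) := by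
    rw [← List.range_add]; congr 1; omega
  rw [← congrFun hfix x, seqFlat, hsplit, List.flatMap_append,
    List.getD_append _ _ _ _ (by rw [length_flatMap_range, blockStart_succ]; omega),
    List.range_succ, List.flatMap_append,
    List.getD_append_right _ _ _ _ (by rw [length_flatMap_range]; omega), length_flatMap_range]
  simp [x]

variable (hL0 : 1 < (f (σ 0)).length)
include hL0

theorem treePR_spec (n : ℕ) :
    n + 1 = blockStart f σ (treePR f σ n).1 + (treePR f σ n).2 ∧
      (treePR f σ n).2 < (f (σ (treePR f σ n).1)).length := by
  induction n with
  | zero => simpa [treePR, blockStart] using hL0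
  | succ n ih =>
    rw [treePR]
    split_ifs with h
    · exact ⟨by dsimp only; omega, h⟩
    · refine ⟨?_, hL _⟩
      rw [blockStart_succ]
      omega

theorem blockStart_Pfun_le {x : ℕ} (hx : 0 < x) : blockStart f σ (Pfun f σ x) ≤ x := by
  have := treePR_spec hL hL0 (x - 1)
  rw [Pfun]
  omega

theorem lt_blockStart_Pfun_succ {x : ℕ} (hx : 0 < x) :
    x < blockStart f σ (Pfun f σ x + 1) := by
  have := treePR_spec hL hL0 (x - 1)
  rw [Pfun, blockStart_succ]
  omega

theorem Pfun_eq_iff {x p : ℕ} (hx : 0 < x) :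
    Pfun f σ x = p ↔ blockStart f σ p ≤ x ∧ x < blockStart f σ (p + 1) := by
  have hlo := blockStart_Pfun_le hL hL0 hx
  have hhi := lt_blockStart_Pfun_succ hL hL0 hx
  have hmono := (blockStart_strictMono hL).monotone
  refine ⟨fun h => h ▸ ⟨hlo, hhi⟩, fun ⟨h₁, h₂⟩ => ?_⟩
  by_contra hne
  rcases Nat.lt_or_gt_of_ne hne with h | h
  · exact absurd (hmono (show _ + 1 ≤ p from h)) (by omega)
  · exact absurd (hmono (show p + 1 ≤ _ from h)) (by omega)

theorem Pfun_blockStart_add {q j : ℕ} (hq : 0 < q) (hj : j < (f (σ q)).length) :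
    Pfun f σ (blockStart f σ q + j) = q := by
  have : q ≤ blockStart f σ q := (blockStart_strictMono hL).le_apply
  rw [Pfun_eq_iff hL hL0 (by omega), blockStart_succ]
  omega

theorem Pfun_mono : Monotone (Pfun f σ) := by
  intro x y hxy
  rcases Nat.eq_zero_or_pos x with rfl | hx
  · exact Nat.zero_le _
  by_contra! h
  have := (blockStart_strictMono hL).monotone (show _ + 1 ≤ _ from h)
  have := blockStart_Pfun_le hL hL0 hx
  have := lt_blockStart_Pfun_succ hL hL0 (hx.trans_le hxy)
  omega

end Blocks

section Transport

variable {Γ : Type*} (f : Γ → List Γ) (σ : ℕ → Γ)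

def transport (m n x : ℕ) : ℕ :=
  if x = 0 then 0
  else if x = m then n
  else blockStart f σ (transport m n (Pfun f σ x)) + (x - blockStart f σ (Pfun f σ x))
termination_by x
decreasing_by exact Pfun_lt f σ (by omega)

theorem transport_root {m : ℕ} (n : ℕ) (hm : m ≠ 0) : transport f σ m n m = n := by
  rw [transport]; simp [hm]

theorem transport_of_ne {m n x : ℕ} (hx : x ≠ 0) (hxm : x ≠ m) :
    transport f σ m n x =
      blockStart f σ (transport f σ m n (Pfun f σ x)) + (x - blockStart f σ (Pfun f σ x)) := by
  rw [transport]; simp [hx, hxm]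

variable {f σ} (hL : ∀ p, 0 < (f (σ p)).length) (hL0 : 1 < (f (σ 0)).length)
  (hfix : seqFlat f σ = σ) {m n : ℕ} (hm : 0 < m) (hn : 0 < n) (hmn : σ m = σ n)
include hL hL0 hfix hm hn hmn

omit hmn in
theorem Pfun_transport_and_apply_eq {x : ℕ} (hx : x ∈ SP (Pfun f σ) m) (hxm : x ≠ m)
    (hq : transport f σ m n (Pfun f σ x) ∈ SP (Pfun f σ) n)
    (hσq : σ (transport f σ m n (Pfun f σ x)) = σ (Pfun f σ x)) :
    Pfun f σ (transport f σ m n x) = transport f σ m n (Pfun f σ x) ∧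
      σ (transport f σ m n x) = σ x := by
  have hx0 : 0 < x := hm.trans_le (le_of_mem_SP (Pfun_le f σ) x hx)
  have hlo := blockStart_Pfun_le hL hL0 hx0
  have hhi := lt_blockStart_Pfun_succ hL hL0 hx0
  rw [blockStart_succ] at hhi
  set p := Pfun f σ x
  set q := transport f σ m n p
  have hq0 : 0 < q := hn.trans_le (le_of_mem_SP (Pfun_le f σ) q hq)
  have hj : x - blockStart f σ p < (f (σ q)).length := by rw [hσq]; omega
  rw [transport_of_ne f σ hx0.ne' hxm]
  refine ⟨Pfun_blockStart_add hL hL0 hq0 hj, ?_⟩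
  rw [apply_blockStart_add hL hfix hj, hσq, ← apply_blockStart_add hL hfix (by omega)]
  congr 1
  omega

theorem transport_mem_SP_and_apply_eq :
    ∀ x ∈ SP (Pfun f σ) m,
      transport f σ m n x ∈ SP (Pfun f σ) n ∧ σ (transport f σ m n x) = σ x := by
  refine SP_induction ?_ fun x hx hxm ⟨hq, hσq⟩ => ?_
  · rw [transport_root f σ n hm.ne', hmn]
    exact ⟨mem_SP_self _ n, rfl⟩
  obtain ⟨hPq, hσx⟩ := Pfun_transport_and_apply_eq hL hL0 hfix hm hn hx hxm hq hσq
  exact ⟨mem_SP_of_apply_mem (hPq ▸ hq), hσx⟩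

theorem Pfun_transport {x : ℕ} (hx : x ∈ SP (Pfun f σ) m) (hxm : x ≠ m) :
    Pfun f σ (transport f σ m n x) = transport f σ m n (Pfun f σ x) :=
  have ⟨hq, hσq⟩ := transport_mem_SP_and_apply_eq hL hL0 hfix hm hn hmn _ (apply_mem_SP hx hxm)
  (Pfun_transport_and_apply_eq hL hL0 hfix hm hn hx hxm hq hσq).1

theorem lt_transport {x : ℕ} (hx : x ∈ SP (Pfun f σ) m) (hxm : x ≠ m) :
    n < transport f σ m n x := by
  have hle := le_of_mem_SP (Pfun_le f σ) _
    (transport_mem_SP_and_apply_eq hL hL0 hfix hm hn hmn x hx).1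
  refine hle.lt_of_ne fun h => ?_
  have hP := le_of_mem_SP (Pfun_le f σ) _
    (transport_mem_SP_and_apply_eq hL hL0 hfix hm hn hmn _ (apply_mem_SP hx hxm)).1
  rw [← Pfun_transport hL hL0 hfix hm hn hmn hx hxm, ← h] at hP
  exact (Pfun_lt f σ hn).not_ge hP

theorem transport_leftInvOn :
    Set.LeftInvOn (transport f σ n m) (transport f σ m n) (SP (Pfun f σ) m) := by
  refine SP_induction ?_ fun x hx hxm ih => ?_
  · rw [transport_root f σ n hm.ne', transport_root f σ m hn.ne']
  have hx0 : 0 < x := hm.trans_le (le_of_mem_SP (Pfun_le f σ) x hx)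
  have hlo := blockStart_Pfun_le hL hL0 hx0
  have hy := lt_transport hL hL0 hfix hm hn hmn hx hxm
  rw [transport_of_ne f σ (by omega) hy.ne', Pfun_transport hL hL0 hfix hm hn hmn hx hxm, ih,
    transport_of_ne f σ hx0.ne' hxm]
  omega

theorem transport_strictMonoOn : StrictMonoOn (transport f σ m n) (SP (Pfun f σ) m) := by
  suffices ∀ y ∈ SP (Pfun f σ) m, ∀ x ∈ SP (Pfun f σ) m, x < y →
      transport f σ m n x < transport f σ m n y from fun x hx y hy hxy => this y hy x hx hxy
  refine SP_induction (fun x hx hxm => absurd hxm (le_of_mem_SP (Pfun_le f σ) x hx).not_gt)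
    fun y hy hym ih x hx hxy => ?_
  by_cases hxm : x = m
  · rw [hxm, transport_root f σ n hm.ne']
    exact lt_transport hL hL0 hfix hm hn hmn hy hym
  have hx0 : 0 < x := hm.trans_le (le_of_mem_SP (Pfun_le f σ) x hx)
  have hxlo := blockStart_Pfun_le hL hL0 hx0
  have hxhi := lt_blockStart_Pfun_succ hL hL0 hx0
  have hylo := blockStart_Pfun_le hL hL0 (hx0.trans hxy)
  have hyhi := lt_blockStart_Pfun_succ hL hL0 (hx0.trans hxy)
  rw [blockStart_succ] at hxhi hyhi
  have hσq := (transport_mem_SP_and_apply_eq hL hL0 hfix hm hn hmn _ (apply_mem_SP hx hxm)).2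
  rw [transport_of_ne f σ hx0.ne' hxm, transport_of_ne f σ (hx0.trans hxy).ne' hym]
  rcases (Pfun_mono hL hL0 hxy.le).eq_or_lt with hP | hP
  · rw [hP] at hxlo ⊢
    omega
  · have hq := (blockStart_strictMono hL).monotone (ih _ (apply_mem_SP hx hxm) hP)
    rw [blockStart_succ, hσq] at hq
    omega

theorem treeEquiv_of_apply_eq : treeEquiv (Pfun f σ) m n := by
  have hmaps := fun x hx => (transport_mem_SP_and_apply_eq hL hL0 hfix hm hn hmn x hx).1
  have hmaps' := fun x hx => (transport_mem_SP_and_apply_eq hL hL0 hfix hn hm hmn.symm x hx).1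
  refine ⟨transport f σ m n, Set.InvOn.bijOn ⟨transport_leftInvOn hL hL0 hfix hm hn hmn,
      transport_leftInvOn hL hL0 hfix hn hm hmn.symm⟩ hmaps hmaps',
    transport_strictMonoOn hL hL0 hfix hm hn hmn, transport_root f σ n hm.ne',
    fun x hx hxm => (Pfun_transport hL hL0 hfix hm hn hmn hx hxm).symm⟩

end Transport

end MorphicTree

/-- The tree function of a pure morphic sequence `f^∞(a)` is rational: its tree has
at most `|Γ| + 1` distinct subtrees. -/
theorem morphic_tree_function_rational {Γ : Type} [Fintype Γ] (f : Γ → List Γ) (a : Γ)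
    (u : List Γ) (hne : ∀ b : Γ, f b ≠ []) (hu : u ≠ []) (hfa : f a = a :: u)
    (σ : ℕ → Γ) (hσ0 : σ 0 = a) (hfix : seqFlat f σ = σ) :
    ∃ F : Finset ℕ, F.card ≤ Fintype.card Γ + 1 ∧
      ∀ n : ℕ, ∃ m ∈ F, treeEquiv (Pfun f σ) m n := by
  have hL : ∀ p, 0 < (f (σ p)).length := fun p => List.length_pos_iff.2 (hne _)
  have hL0 : 1 < (f (σ 0)).length := by simp [hσ0, hfa, List.length_pos_iff.2 hu]
  -- the root gets its own label `none`, whence the `+ 1`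
  obtain ⟨F, hcard, hF⟩ :=
    exists_finset_card_le_forall_exists_eq fun n => if n = 0 then none else some (σ n)
  refine ⟨F, Fintype.card_option (α := Γ) ▸ hcard, fun n => ?_⟩
  obtain ⟨m, hmF, hmn⟩ := hF n
  refine ⟨m, hmF, ?_⟩
  split_ifs at hmn with hm hn hn
  · exact hm ▸ hn ▸ MorphicTree.treeEquiv_refl _ _
  · exact MorphicTree.treeEquiv_of_apply_eq hL hL0 hfix (Nat.pos_of_ne_zero hm)
      (Nat.pos_of_ne_zero hn) (Option.some_injective _ hmn)
end

section
/- There exists a sequence σ over {0,1} and a tree function P : ℕ⁺ → ℕ (weakly monotone and surjective) such that the set { σ^{S_P(n)} | n ∈ ℕ } is finite (in fact has exactly two elements), but σ is not morphic. Hence rationality of the tree function cannot be dropped in the subsequence characterization of morphic sequences. -/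
open Finset Function

section Morphic

variable {Γ Δ : Type*}

def IsMorphicVia (f : Γ → List Γ) (τ : Γ → ℕ) (a : Γ) (x : ℕ → ℕ) : Prop :=
  (∀ b, f b ≠ []) ∧ (∃ w, f a = a :: w ∧ w ≠ []) ∧
    ∃ σ : ℕ → Γ, σ 0 = a ∧ seqFlat f σ = σ ∧ x = τ ∘ σ

def IsMorphic (x : ℕ → ℕ) : Prop :=
  ∃ (Γ : Type) (_ : Fintype Γ) (f : Γ → List Γ) (τ : Γ → ℕ) (a : Γ),
    IsMorphicVia f τ a x

lemma length_flatMap_range_ge {f : Γ → List Γ} {σ : ℕ → Γ} {a : Γ} {w : List Γ}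
    (hf : ∀ b, f b ≠ []) (hfa : f a = a :: w) (hw : w ≠ []) (h0 : σ 0 = a) {n : ℕ}
    (hn : 1 ≤ n) : n + 1 ≤ ((List.range n).flatMap fun i => f (σ i)).length := by
  induction n, hn using Nat.le_induction with
  | base => simpa [h0, hfa, Nat.one_le_iff_ne_zero] using hw
  | succ n _ ih =>
    have := List.length_pos_iff.mpr (hf (σ n))
    simp only [List.range_succ, List.flatMap_append, List.length_append, List.flatMap_cons,
      List.flatMap_nil, List.append_nil]
    omega

lemma seqFlat_eq_getD_flatMap_range {f : Γ → List Γ} {σ : ℕ → Γ} {a : Γ} {w : List Γ}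
    (hf : ∀ b, f b ≠ []) (hfa : f a = a :: w) (hw : w ≠ []) (h0 : σ 0 = a) {n : ℕ}
    (hn : 1 ≤ n) :
    seqFlat f σ n = ((List.range n).flatMap fun i => f (σ i)).getD n (σ 0) := by
  rw [seqFlat, List.range_succ, List.flatMap_append]
  exact List.getD_append _ _ _ _ (length_flatMap_range_ge hf hfa hw h0 hn)

lemma IsMorphicVia.subsingleton (f : Γ → List Γ) (τ : Γ → ℕ) (a : Γ) :
    {x | IsMorphicVia f τ a x}.Subsingleton := by
  rintro _ ⟨hf, ⟨w, hfa, hw⟩, σ, h0, hσ, rfl⟩ _ ⟨-, -, σ', h0', hσ', rfl⟩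
  suffices σ = σ' by rw [this]
  funext n
  induction n using Nat.strong_induction_on with
  | _ n ih =>
    rcases Nat.eq_zero_or_pos n with rfl | hn
    · rw [h0, h0']
    · have hpre : ((List.range n).flatMap fun i => f (σ i)) =
          (List.range n).flatMap fun i => f (σ' i) :=
        List.flatMap_congr fun i hi => by rw [ih i (List.mem_range.mp hi)]
      rw [← hσ, ← hσ', seqFlat_eq_getD_flatMap_range hf hfa hw h0 hn,
        seqFlat_eq_getD_flatMap_range hf hfa hw h0' hn, hpre, h0, h0']

lemma seqFlat_map_equiv (e : Γ ≃ Δ) (f : Γ → List Γ) (σ : ℕ → Γ) (n : ℕ) :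
    seqFlat (fun d => (f (e.symm d)).map e) (e ∘ σ) n = e (seqFlat f σ n) := by
  simp only [seqFlat, comp_apply, Equiv.symm_apply_apply, ← List.map_flatMap,
    List.getD_eq_getElem?_getD, List.getElem?_map, Option.getD_map]

lemma IsMorphicVia.map_equiv {f : Γ → List Γ} {τ : Γ → ℕ} {a : Γ} {x : ℕ → ℕ}
    (h : IsMorphicVia f τ a x) (e : Γ ≃ Δ) :
    IsMorphicVia (fun d => (f (e.symm d)).map e) (τ ∘ e.symm) (e a) x := by
  obtain ⟨hf, ⟨w, hfa, hw⟩, σ, h0, hσ, rfl⟩ := h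
  refine ⟨fun d => by simpa using hf _, ⟨w.map e, by simp [hfa], by simpa using hw⟩,
    e ∘ σ, by simp [h0], funext fun n => ?_, by ext; simp⟩
  rw [seqFlat_map_equiv, hσ, comp_apply]

lemma countable_setOf_isMorphic : {x | IsMorphic x}.Countable := by
  let D := Σ k : ℕ, (Fin k → List (Fin k)) × (Fin k → ℕ) × Fin k
  have hsub : {x | IsMorphic x} ⊆ ⋃ d : D, {x | IsMorphicVia d.2.1 d.2.2.1 d.2.2.2 x} := by
    rintro x ⟨Γ, _, f, τ, a, h⟩
    exact Set.mem_iUnion.mpr ⟨⟨_, _, _, _⟩, h.map_equiv (Fintype.equivFin Γ)⟩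
  exact (Set.countable_iUnion fun d => (IsMorphicVia.subsingleton _ _ _).countable).mono hsub

end Morphic

section BlockIndex

variable {f : ℕ → ℕ}

/-- The index `m` of the block `[f m, f (m + 1))` containing `p`, for a strictly monotone
`f` with `f 0 = 0`. -/
def blockIndex (f : ℕ → ℕ) (p : ℕ) : ℕ := Nat.findGreatest (fun m => f m ≤ p) p

@[simp] lemma blockIndex_zero : blockIndex f 0 = 0 := Nat.findGreatest_zero

lemma apply_blockIndex_le (hf0 : f 0 = 0) (p : ℕ) : f (blockIndex f p) ≤ p :=
  Nat.findGreatest_spec (P := fun m => f m ≤ p) (Nat.zero_le p) (by simp [hf0])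

lemma lt_apply_blockIndex_succ (hf : StrictMono f) (p : ℕ) : p < f (blockIndex f p + 1) := by
  by_contra! h
  exact Nat.findGreatest_is_greatest (Nat.lt_succ_self _) (hf.le_apply.trans h) h

lemma blockIndex_eq (hf : StrictMono f) {m p : ℕ} (h₁ : f m ≤ p) (h₂ : p < f (m + 1)) :
    blockIndex f p = m :=
  Nat.findGreatest_eq_iff.mpr ⟨hf.le_apply.trans h₁, fun _ => h₁,
    fun _ hmn _ hn => absurd (hf.monotone (show m + 1 ≤ _ from hmn)) (by omega)⟩

lemma blockIndex_add (hf : StrictMono f) {m t : ℕ} (ht : t < f (m + 1) - f m) :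
    blockIndex f (f m + t) = m :=
  blockIndex_eq hf (by omega) (by omega)

lemma blockIndex_le_iff (hf : StrictMono f) (hf0 : f 0 = 0) {m p : ℕ} :
    blockIndex f p ≤ m ↔ p < f (m + 1) := by
  constructor
  · intro h
    exact (lt_apply_blockIndex_succ hf p).trans_le (hf.monotone (by omega))
  · intro h
    by_contra! hm
    exact absurd ((hf.monotone (show m + 1 ≤ _ from hm)).trans (apply_blockIndex_le hf0 p))
      (by omega)

lemma lt_of_blockIndex_lt (hf : StrictMono f) (hf0 : f 0 = 0) {p q : ℕ}
    (h : blockIndex f p < blockIndex f q) : p < q :=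
  calc p < f (blockIndex f p + 1) := lt_apply_blockIndex_succ hf p
    _ ≤ f (blockIndex f q) := hf.monotone h
    _ ≤ q := apply_blockIndex_le hf0 q

lemma blockIndex_mono (hf : StrictMono f) (hf0 : f 0 = 0) : Monotone (blockIndex f) :=
  fun _ _ hpq => not_lt.mp fun h => (lt_of_blockIndex_lt hf hf0 h).not_ge hpq

end BlockIndex

lemma sum_range_injective :
    Injective fun (f : ℕ → ℕ) (n : ℕ) => ∑ i ∈ range n, f i := by
  intro f g h
  funext i
  have := congrFun h (i + 1)
  simp only [sum_range_succ, congrFun h i] at this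
  omega

lemma infinite_SP {P : ℕ → ℕ} (hP : ∀ n, ∃ c, n < c ∧ P c = n) (n : ℕ) :
    (SP P n).Infinite := by
  choose child hlt hchild using hP
  have hmem (k : ℕ) : P^[k] (child^[k] n) = n := by
    induction k with
    | zero => rfl
    | succ k ih => rw [iterate_succ_apply, iterate_succ_apply', hchild, ih]
  have hmono : StrictMono fun k => child^[k] n :=
    strictMono_nat_of_lt_succ fun k => by rw [iterate_succ_apply']; exact hlt _
  exact Set.infinite_of_injective_forall_mem hmono.injective fun k => ⟨k, hmem k⟩

/-! Level `m` of the tree consists of the chunks `0, …, m`, chunk `c` having `u c` nodes.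
Chunk `0` is the spine node, and chunk `c + 1` of level `m + 1` consists of the children of
chunk `c` of level `m`; so the zeros of chunk `c + 1` form level `c` of the tree attached to the
spine node `m - c`. A node is a pair (level, slot), numbered in breadth-first order. -/

namespace SpineTree

structure Admissible (u : ℕ → ℕ) : Prop where
  mono : Monotone u
  zero : u 0 = 1

variable {u : ℕ → ℕ}

def chunkStart (u : ℕ → ℕ) (c : ℕ) : ℕ := ∑ i ∈ range c, u i

def levelStart (u : ℕ → ℕ) (m : ℕ) : ℕ := ∑ i ∈ range m, chunkStart u (i + 1)

def chunk (u : ℕ → ℕ) (s : ℕ) : ℕ := blockIndex (chunkStart u) s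

def level (u : ℕ → ℕ) (p : ℕ) : ℕ := blockIndex (levelStart u) p

def slot (u : ℕ → ℕ) (p : ℕ) : ℕ := p - levelStart u (level u p)

/-- Offset `o` in chunk `c + 1` goes to offset `min o (u c - 1)` in chunk `c`. For `c = 0`
truncated subtraction and `u 0 = 1` make this `0`: the spine maps to the spine. -/
def slotParent (u : ℕ → ℕ) (s : ℕ) : ℕ :=
  chunkStart u (chunk u s - 1) + min (s - chunkStart u (chunk u s)) (u (chunk u s - 1) - 1)

def parent (u : ℕ → ℕ) (p : ℕ) : ℕ :=
  levelStart u (level u p - 1) + slotParent u (slot u p)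

def label (u : ℕ → ℕ) (p : ℕ) : ℕ := if slot u p = 0 then 1 else 0

lemma Admissible.one_le (hu : Admissible u) (c : ℕ) : 1 ≤ u c :=
  hu.zero ▸ hu.mono (Nat.zero_le c)

@[simp] lemma chunkStart_zero : chunkStart u 0 = 0 := rfl

lemma chunkStart_succ (c : ℕ) : chunkStart u (c + 1) = chunkStart u c + u c :=
  sum_range_succ _ _

lemma chunkStart_strictMono (hu : Admissible u) : StrictMono (chunkStart u) :=
  strictMono_nat_of_lt_succ fun c => by rw [chunkStart_succ]; have := hu.one_le c; omega

@[simp] lemma levelStart_zero : levelStart u 0 = 0 := rfl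

lemma levelStart_succ (m : ℕ) : levelStart u (m + 1) = levelStart u m + chunkStart u (m + 1) :=
  sum_range_succ _ _

lemma levelStart_strictMono (hu : Admissible u) : StrictMono (levelStart u) :=
  strictMono_nat_of_lt_succ fun m => by
    rw [levelStart_succ, chunkStart_succ]; have := hu.one_le m; omega

lemma chunkStart_chunk_le (s : ℕ) : chunkStart u (chunk u s) ≤ s :=
  apply_blockIndex_le rfl s

lemma lt_chunkStart_chunk_succ (hu : Admissible u) (s : ℕ) :
    s < chunkStart u (chunk u s + 1) :=
  lt_apply_blockIndex_succ (chunkStart_strictMono hu) s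

lemma chunk_mono (hu : Admissible u) : Monotone (chunk u) :=
  blockIndex_mono (chunkStart_strictMono hu) rfl

lemma lt_of_chunk_lt (hu : Admissible u) {s s' : ℕ} (h : chunk u s < chunk u s') : s < s' :=
  lt_of_blockIndex_lt (chunkStart_strictMono hu) rfl h

lemma chunk_le_iff (hu : Admissible u) {s c : ℕ} : chunk u s ≤ c ↔ s < chunkStart u (c + 1) :=
  blockIndex_le_iff (chunkStart_strictMono hu) rfl

lemma chunk_eq_zero_iff (hu : Admissible u) {s : ℕ} : chunk u s = 0 ↔ s = 0 := by
  rw [← Nat.le_zero, chunk_le_iff hu, chunkStart_succ, chunkStart_zero, hu.zero]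
  omega

lemma chunk_slotParent (hu : Admissible u) (s : ℕ) :
    chunk u (slotParent u s) = chunk u s - 1 := by
  refine blockIndex_add (chunkStart_strictMono hu) ?_
  rw [chunkStart_succ]
  have := hu.one_le (chunk u s - 1)
  omega

lemma iterate_slotParent_eq_zero_iff (hu : Admissible u) (k s : ℕ) :
    (slotParent u)^[k] s = 0 ↔ chunk u s ≤ k := by
  have hchunk : chunk u ((slotParent u)^[k] s) = chunk u s - k := by
    induction k with
    | zero => rfl
    | succ k ih => rw [iterate_succ_apply', chunk_slotParent hu, ih, Nat.sub_sub]
  rw [← chunk_eq_zero_iff hu, hchunk]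
  omega

lemma slotParent_mono (hu : Admissible u) : Monotone (slotParent u) := by
  intro s s' hss'
  rcases (chunk_mono hu hss').eq_or_lt with hc | hc
  · have := chunkStart_chunk_le (u := u) s
    unfold slotParent
    rw [hc] at this ⊢
    omega
  · rcases Nat.eq_zero_or_pos (chunk u s) with h0 | hpos
    · have h := (iterate_slotParent_eq_zero_iff hu 1 s).mpr (by omega)
      rw [iterate_one] at h
      exact h ▸ Nat.zero_le _
    · refine (lt_of_chunk_lt hu ?_).le
      rw [chunk_slotParent hu, chunk_slotParent hu]
      exact Nat.sub_lt_sub_right hpos hc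

lemma chunk_add (hu : Admissible u) (s : ℕ) : chunk u (s + u (chunk u s)) = chunk u s + 1 := by
  have h₁ := chunkStart_chunk_le (u := u) s
  have h₂ := lt_chunkStart_chunk_succ hu s
  have h₃ := hu.mono (Nat.le_add_right (chunk u s) 1)
  refine blockIndex_eq (chunkStart_strictMono hu) ?_ ?_ <;>
    simp only [chunkStart_succ] at * <;> omega

lemma slotParent_add (hu : Admissible u) (s : ℕ) : slotParent u (s + u (chunk u s)) = s := by
  have h₁ := chunkStart_chunk_le (u := u) s
  have h₂ := lt_chunkStart_chunk_succ hu s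
  rw [slotParent, chunk_add hu, Nat.add_sub_cancel, chunkStart_succ]
  rw [chunkStart_succ] at h₂
  omega


lemma levelStart_level_le (p : ℕ) : levelStart u (level u p) ≤ p :=
  apply_blockIndex_le rfl p

lemma lt_levelStart_level_succ (hu : Admissible u) (p : ℕ) :
    p < levelStart u (level u p + 1) :=
  lt_apply_blockIndex_succ (levelStart_strictMono hu) p

lemma level_mono (hu : Admissible u) : Monotone (level u) :=
  blockIndex_mono (levelStart_strictMono hu) rfl

lemma lt_of_level_lt (hu : Admissible u) {p q : ℕ} (h : level u p < level u q) : p < q :=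
  lt_of_blockIndex_lt (levelStart_strictMono hu) rfl h

lemma levelStart_level_add_slot (p : ℕ) : levelStart u (level u p) + slot u p = p := by
  have := levelStart_level_le (u := u) p
  rw [slot]; omega

lemma chunk_slot_le_level (hu : Admissible u) (p : ℕ) : chunk u (slot u p) ≤ level u p := by
  have h₁ := levelStart_level_le (u := u) p
  have h₂ := lt_levelStart_level_succ hu p
  rw [chunk_le_iff hu, slot]
  rw [levelStart_succ] at h₂
  omega

lemma level_levelStart_add (hu : Admissible u) {m s : ℕ} (hs : chunk u s ≤ m) :
    level u (levelStart u m + s) = m := by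
  rw [chunk_le_iff hu] at hs
  exact blockIndex_add (levelStart_strictMono hu) (by rw [levelStart_succ]; omega)

lemma slot_levelStart_add (hu : Admissible u) {m s : ℕ} (hs : chunk u s ≤ m) :
    slot u (levelStart u m + s) = s := by
  rw [slot, level_levelStart_add hu hs, Nat.add_sub_cancel_left]

lemma slot_eq_zero_iff (hu : Admissible u) {p : ℕ} :
    slot u p = 0 ↔ p ∈ Set.range (levelStart u) := by
  constructor
  · intro h
    exact ⟨level u p, by simpa [h] using levelStart_level_add_slot (u := u) p⟩
  · rintro ⟨m, rfl⟩
    simpa using slot_levelStart_add hu (m := m) (s := 0) (by simp [chunk])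

lemma level_parent (hu : Admissible u) (p : ℕ) : level u (parent u p) = level u p - 1 := by
  refine level_levelStart_add hu ?_
  rw [chunk_slotParent hu]
  have := chunk_slot_le_level hu p
  omega

lemma slot_parent (hu : Admissible u) (p : ℕ) :
    slot u (parent u p) = slotParent u (slot u p) := by
  refine slot_levelStart_add hu ?_
  rw [chunk_slotParent hu]
  have := chunk_slot_le_level hu p
  omega

lemma level_iterate_parent (hu : Admissible u) (k p : ℕ) :
    level u ((parent u)^[k] p) = level u p - k := by
  induction k with
  | zero => rfl
  | succ k ih => rw [iterate_succ_apply', level_parent hu, ih, Nat.sub_sub]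

lemma slot_iterate_parent (hu : Admissible u) (k p : ℕ) :
    slot u ((parent u)^[k] p) = (slotParent u)^[k] (slot u p) := by
  induction k with
  | zero => rfl
  | succ k ih => rw [iterate_succ_apply', slot_parent hu, ih, iterate_succ_apply']

lemma slotParent_zero : slotParent u 0 = 0 := by
  simp [slotParent, chunk]

lemma parent_zero : parent u 0 = 0 := by
  simp [parent, slot, level, slotParent_zero]

lemma parent_mono (hu : Admissible u) : Monotone (parent u) := by
  intro p q hpq
  rcases (level_mono hu hpq).eq_or_lt with hl | hl
  · have hp := levelStart_level_add_slot (u := u) p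
    have hq := levelStart_level_add_slot (u := u) q
    have hs : slot u p ≤ slot u q := by rw [hl] at hp; omega
    unfold parent
    rw [hl]
    exact Nat.add_le_add_left (slotParent_mono hu hs) _
  · rcases Nat.eq_zero_or_pos (level u p) with h0 | hpos
    · have := lt_levelStart_level_succ hu p
      rw [h0, levelStart_succ, levelStart_zero, chunkStart_succ, chunkStart_zero, hu.zero] at this
      rw [show p = 0 by omega, parent_zero]
      exact Nat.zero_le _
    · refine (lt_of_level_lt hu ?_).le
      rw [level_parent hu, level_parent hu]
      exact Nat.sub_lt_sub_right hpos hl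

lemma exists_child (hu : Admissible u) (p : ℕ) : ∃ c, p < c ∧ parent u c = p := by
  set s := slot u p + u (chunk u (slot u p))
  have hs : chunk u s ≤ level u p + 1 := by
    rw [chunk_add hu]; have := chunk_slot_le_level hu p; omega
  refine ⟨levelStart u (level u p + 1) + s, ?_, ?_⟩
  · have := lt_levelStart_level_succ hu p
    omega
  · rw [parent, level_levelStart_add hu hs, slot_levelStart_add hu hs, slotParent_add hu,
      Nat.add_sub_cancel, levelStart_level_add_slot]

lemma eq_levelStart_iff (hu : Admissible u) {p j : ℕ} :
    p = levelStart u j ↔ level u p = j ∧ slot u p = 0 := by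
  have h0 : chunk u 0 ≤ j := by simp [chunk]
  constructor
  · rintro rfl
    simpa using And.intro (level_levelStart_add hu h0) (slot_levelStart_add hu h0)
  · rintro ⟨hl, hs⟩
    rw [← levelStart_level_add_slot (u := u) p, hl, hs, Nat.add_zero]

lemma mem_SP_levelStart_iff (hu : Admissible u) {p j : ℕ} :
    p ∈ SP (parent u) (levelStart u j) ↔
      j ≤ level u p ∧ chunk u (slot u p) ≤ level u p - j := by
  have := chunk_slot_le_level hu p
  simp only [SP, Set.mem_ofPred_eq, eq_levelStart_iff hu, level_iterate_parent hu,
    slot_iterate_parent hu, iterate_slotParent_eq_zero_iff hu]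
  constructor
  · rintro ⟨k, hk, hc⟩
    omega
  · rintro ⟨hj, hc⟩
    exact ⟨level u p - j, by omega, hc⟩

lemma label_eq_zero_of_mem_SP (hu : Admissible u) {p q : ℕ} (hq : slot u q ≠ 0)
    (hp : p ∈ SP (parent u) q) : label u p = 0 := by
  obtain ⟨k, rfl⟩ := hp
  have hspine : Set.MapsTo (parent u) {p | slot u p = 0} {p | slot u p = 0} := fun p hp => by
    simp only [Set.mem_ofPred_eq, slot_parent hu] at hp ⊢
    rw [hp, slotParent_zero]
  rw [label, if_neg (show slot u p ≠ 0 from fun h => hq (hspine.iterate k h))]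

lemma nth_SP_levelStart (hu : Admissible u) (j : ℕ) :
    Nat.nth (· ∈ SP (parent u) (levelStart u j)) =
      fun i => levelStart u (j + level u i) + slot u i := by
  set e := fun i => levelStart u (j + level u i) + slot u i
  have hvalid (i : ℕ) : chunk u (slot u i) ≤ j + level u i :=
    (chunk_slot_le_level hu i).trans (Nat.le_add_left _ _)
  have hmono : StrictMono e := by
    intro i i' hii'
    rcases (level_mono hu hii'.le).eq_or_lt with hl | hl
    · have := levelStart_level_add_slot (u := u) i
      have := levelStart_level_add_slot (u := u) i'
      simp only [e, hl] at *
      omega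
    · apply lt_of_level_lt hu
      simp only [e, level_levelStart_add hu (hvalid _)]
      omega
  have hrange : Set.range e = SP (parent u) (levelStart u j) := by
    ext p
    rw [mem_SP_levelStart_iff hu]
    constructor
    · rintro ⟨i, rfl⟩
      simp only [e, level_levelStart_add hu (hvalid i), slot_levelStart_add hu (hvalid i)]
      exact ⟨by omega, by simpa using chunk_slot_le_level hu i⟩
    · rintro ⟨hj, hc⟩
      refine ⟨levelStart u (level u p - j) + slot u p, ?_⟩
      simp only [e, level_levelStart_add hu hc, slot_levelStart_add hu hc,
        Nat.add_sub_cancel' hj, levelStart_level_add_slot]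
  have hinf : (SP (parent u) (levelStart u j)).Infinite := infinite_SP (exists_child hu) _
  exact (StrictMono.range_inj (Nat.nth_strictMono hinf) hmono).mp
    (by rw [Nat.range_nth_of_infinite hinf, hrange]; rfl)

lemma subseq_label_SP_levelStart (hu : Admissible u) (j : ℕ) :
    subseq (label u) (SP (parent u) (levelStart u j)) = label u := by
  funext i
  simp only [subseq, nth_SP_levelStart hu, label,
    slot_levelStart_add hu ((chunk_slot_le_level hu i).trans (Nat.le_add_left _ _))]

lemma subseq_label_SP_of_slot_ne_zero (hu : Admissible u) {q : ℕ} (hq : slot u q ≠ 0) :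
    subseq (label u) (SP (parent u) q) = fun _ => 0 :=
  funext fun i => label_eq_zero_of_mem_SP hu hq
    (Nat.nth_mem_of_infinite (infinite_SP (exists_child hu) q) i)

lemma label_ne_zero : label u ≠ fun _ => 0 := fun h => by
  simpa [label, slot] using congrFun h 0

lemma range_subseq_label (hu : Admissible u) :
    Set.range (fun n => subseq (label u) (SP (parent u) n)) = {label u, fun _ => 0} := by
  ext x
  simp only [Set.mem_range, Set.mem_insert_iff, Set.mem_singleton_iff]
  constructor
  · rintro ⟨n, rfl⟩
    by_cases hn : slot u n = 0
    · obtain ⟨j, rfl⟩ := (slot_eq_zero_iff hu).mp hn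
      exact Or.inl (subseq_label_SP_levelStart hu j)
    · exact Or.inr (subseq_label_SP_of_slot_ne_zero hu hn)
  · rintro (rfl | rfl)
    · exact ⟨0, subseq_label_SP_levelStart hu 0⟩
    · have h1 : chunk u 1 ≤ 1 := by
        rw [chunk_le_iff hu, chunkStart_succ, chunkStart_succ, chunkStart_zero, hu.zero]
        have := hu.one_le 1
        omega
      refine ⟨levelStart u 1 + 1, subseq_label_SP_of_slot_ne_zero hu ?_⟩
      rw [slot_levelStart_add hu h1]
      exact one_ne_zero

lemma label_injOn : Set.InjOn label {u | Admissible u} := by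
  intro u hu v hv h
  have hL : levelStart u = levelStart v := by
    rw [← (levelStart_strictMono hu).range_inj (levelStart_strictMono hv)]
    ext p
    rw [← slot_eq_zero_iff hu, ← slot_eq_zero_iff hv]
    have := congrFun h p
    simp only [label] at this
    split_ifs at this <;> simp_all
  have hC : chunkStart u = chunkStart v := by
    funext c
    cases c with
    | zero => rfl
    | succ c =>
      exact congrFun (@sum_range_injective (fun i => chunkStart u (i + 1))
        (fun i => chunkStart v (i + 1)) hL) c
  exact @sum_range_injective u v hC

open Classical in
noncomputable def countProfile (A : Set ℕ) (c : ℕ) : ℕ := 1 + Nat.count (· ∈ A) c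

open Classical in
lemma admissible_countProfile (A : Set ℕ) : Admissible (countProfile A) :=
  ⟨fun _ _ h => Nat.add_le_add_left (Nat.count_monotone _ h) 1, by simp [countProfile]⟩

lemma countProfile_injective : Injective countProfile := by
  intro A B h
  ext n
  have h₁ := congrFun h (n + 1)
  have h₂ := congrFun h n
  simp only [countProfile, Nat.count_succ] at h₁ h₂
  split_ifs at h₁ <;> simp_all

theorem exists_admissible_not_isMorphic : ∃ u, Admissible u ∧ ¬ IsMorphic (label u) := by
  by_contra! h
  let F : Set ℕ → {x | IsMorphic x} := fun A =>
    ⟨label (countProfile A), h _ (admissible_countProfile A)⟩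
  have hF : Injective F := fun A B hAB => countProfile_injective <|
    label_injOn (admissible_countProfile A) (admissible_countProfile B) (congrArg Subtype.val hAB)
  have := countable_setOf_isMorphic.to_subtype
  have := hF.countable
  obtain ⟨g, hg⟩ := exists_surjective_nat (Set ℕ)
  exact cantor_surjective g hg

end SpineTree

open SpineTree in
/-- There is a sequence `σ` over `{0,1}` and a (not rational) tree function `P` with
`{ σ^{S_P(n)} | n ∈ ℕ }` finite — in fact of exactly two elements — while `σ` is not
morphic. Hence rationality cannot be dropped in the subsequence characterization. -/
theorem not_morphic_with_two_subsequences :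
    ∃ (σ : ℕ → ℕ) (P : ℕ → ℕ),
      (∀ n, σ n = 0 ∨ σ n = 1) ∧
      P 0 = 0 ∧
      (∀ n, 1 ≤ n → P n ≤ P (n + 1)) ∧
      (∀ m : ℕ, ∃ n, 1 ≤ n ∧ P n = m) ∧
      (Set.range fun n : ℕ => subseq σ (SP P n)).Finite ∧
      (Set.range fun n : ℕ => subseq σ (SP P n)).ncard = 2 ∧
      ∀ (Γ : Type) (_ : Fintype Γ) (f : Γ → List Γ) (τ : Γ → ℕ) (a : Γ)
        (u : List Γ) (σΓ : ℕ → Γ),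
        (∀ b : Γ, f b ≠ []) → f a = a :: u → u ≠ [] →
        σΓ 0 = a → seqFlat f σΓ = σΓ →
        σ ≠ fun n => τ (σΓ n) := by
  obtain ⟨u, hu, hnot⟩ := exists_admissible_not_isMorphic
  have hrange := range_subseq_label hu
  refine ⟨label u, parent u, fun n => ?_, parent_zero, fun n _ => parent_mono hu n.le_succ,
    fun m => ?_, ?_, ?_, ?_⟩
  · unfold label
    split_ifs <;> simp
  · obtain ⟨c, hmc, hc⟩ := exists_child hu m
    exact ⟨c, by omega, hc⟩
  · rw [hrange]
    exact (Set.finite_singleton _).insert _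
  · rw [hrange]
    exact Set.ncard_pair label_ne_zero
  · intro Γ hΓ f τ a w σ hf hfa hw h0 hσ heq
    exact hnot ⟨Γ, hΓ, f, τ, a, hf, ⟨w, hfa, hw⟩, σ, h0, hσ, heq⟩
end

section
/- Let σ = τ(f^∞(a)) be a morphic sequence over Σ, with f : Γ → Γ⁺, f(a) = a·u, u ∈ Γ⁺, τ : Γ → Σ. Consider the term rewriting system R_σ over the signature Σ ∪ Γ ∪ Γ̄ ∪ {S, E} (Γ̄ a disjoint copy of Γ; E a constant, all other symbols unary) with rules: S(b(x)) → τ(b)(S(b̄(x))) for all b ∈ Γ; b̄(c(x)) → c(b̄(x)) for all b,c ∈ Γ; b̄(E) → f(b)(E) for all b ∈ Γ. Then for every n > 0 there is a finite R_σ-reduction τ(a)(S(u(E))) →⁺ τ(fⁿ(a))(S(fⁿ(u)(E))), where for a word w of unary symbols, w(t) abbreviates the nested application w₀(w₁(⋯(w_{k-1}(t))⋯)). -/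
/-! One sweep of `S` over a word `w` of `Γ`-letters emits `τ(w)` and leaves `f(w)` behind it:
each letter `b` is read by `S`, its barred copy `b̄` travels to the end of the term and unfolds
there into `f(b)`. Starting from `τ(a) S u`, the sweep over `fⁿ(u)` turns `τ(fⁿ(a)) S fⁿ(u)` into
`τ(fⁿ(a) fⁿ(u)) S fⁿ⁺¹(u)`, and `fⁿ(a) fⁿ(u) = fⁿ(a u) = fⁿ⁺¹(a)` because `f(a) = a u`. The first
sweep is over `u ≠ []`, so the whole reduction is nonempty. -/

/-- Applying a morphism `f : Γ → Γ⁺` (extended to words by concatenation) `n` times. -/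
def wordIter {Γ : Type*} (f : Γ → List Γ) (n : ℕ) (w : List Γ) : List Γ :=
  (fun v => v.flatMap f)^[n] w

/-- The signature `Σ ∪ Γ ∪ Γ̄ ∪ {S}` of unary symbols (plus the constant `E`,
represented by the end of the list). A term `w₀(w₁(⋯(E)⋯))` is the list `[w₀, w₁, …]`. -/
inductive MSym (A Γ : Type) where
  | out : A → MSym A Γ
  | lett : Γ → MSym A Γ
  | bar : Γ → MSym A Γ
  | S : MSym A Γ

/-- One rewrite step of the system `R_σ`: rules `S(b(x)) → τ(b)(S(b̄(x)))`,
`b̄(c(x)) → c(b̄(x))`, `b̄(E) → f(b)(E)`, applied at any position. -/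
def MStep {A Γ : Type} (f : Γ → List Γ) (τ : Γ → A)
    (t t' : List (MSym A Γ)) : Prop :=
  (∃ (c x : List (MSym A Γ)) (b : Γ),
      t = c ++ [MSym.S, MSym.lett b] ++ x ∧
      t' = c ++ [MSym.out (τ b), MSym.S, MSym.bar b] ++ x) ∨
  (∃ (c x : List (MSym A Γ)) (b d : Γ),
      t = c ++ [MSym.bar b, MSym.lett d] ++ x ∧
      t' = c ++ [MSym.lett d, MSym.bar b] ++ x) ∨
  (∃ (c : List (MSym A Γ)) (b : Γ),
      t = c ++ [MSym.bar b] ∧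
      t' = c ++ (f b).map MSym.lett)

section Iterate

variable {Γ : Type*} (f : Γ → List Γ)

theorem wordIter_succ (n : ℕ) (w : List Γ) :
    wordIter f (n + 1) w = (wordIter f n w).flatMap f :=
  Function.iterate_succ_apply' _ n w

theorem wordIter_succ' (n : ℕ) (w : List Γ) :
    wordIter f (n + 1) w = wordIter f n (w.flatMap f) :=
  Function.iterate_succ_apply _ n w

theorem wordIter_append (n : ℕ) (x y : List Γ) :
    wordIter f n (x ++ y) = wordIter f n x ++ wordIter f n y := by
  induction n with
  | zero => rfl
  | succ n ih => simp only [wordIter_succ, ih, List.flatMap_append]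

theorem wordIter_succ_singleton_of_eq_cons {a : Γ} {u : List Γ} (hfa : f a = a :: u) (n : ℕ) :
    wordIter f (n + 1) [a] = wordIter f n [a] ++ wordIter f n u := by
  rw [wordIter_succ', List.flatMap_singleton, hfa, ← wordIter_append, List.singleton_append]

end Iterate

namespace MStep

variable {A Γ : Type} (f : Γ → List Γ) (τ : Γ → A)

theorem bar_moves_right (b : Γ) (v : List Γ) (p : List (MSym A Γ)) :
    Relation.ReflTransGen (MStep f τ)
      (p ++ MSym.bar b :: v.map MSym.lett) (p ++ v.map MSym.lett ++ [MSym.bar b]) := by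
  induction v generalizing p with
  | nil => simp only [List.map_nil, List.append_nil]; rfl
  | cons d v ih =>
    have swap : MStep f τ (p ++ MSym.bar b :: (d :: v).map MSym.lett)
        (p ++ [MSym.lett d] ++ MSym.bar b :: v.map MSym.lett) :=
      Or.inr (Or.inl ⟨p, v.map MSym.lett, b, d, by simp, by simp⟩)
    simpa using (ih (p ++ [MSym.lett d])).head swap

theorem read_letter (b : Γ) (v : List Γ) (p : List (MSym A Γ)) :
    Relation.TransGen (MStep f τ)
      (p ++ MSym.S :: MSym.lett b :: v.map MSym.lett)
      (p ++ [MSym.out (τ b)] ++ MSym.S :: (v ++ f b).map MSym.lett) := by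
  have read : MStep f τ (p ++ MSym.S :: MSym.lett b :: v.map MSym.lett)
      (p ++ [MSym.out (τ b), MSym.S] ++ MSym.bar b :: v.map MSym.lett) :=
    Or.inl ⟨p, v.map MSym.lett, b, by simp, by simp⟩
  have unfold : MStep f τ (p ++ [MSym.out (τ b), MSym.S] ++ v.map MSym.lett ++ [MSym.bar b])
      (p ++ [MSym.out (τ b)] ++ MSym.S :: (v ++ f b).map MSym.lett) :=
    Or.inr (Or.inr ⟨_, b, rfl, by simp⟩)
  exact .head' read ((bar_moves_right f τ b v _).tail unfold)

theorem sweep (w acc : List Γ) (p : List (MSym A Γ)) :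
    Relation.ReflTransGen (MStep f τ)
      (p ++ MSym.S :: (w ++ acc).map MSym.lett)
      (p ++ w.map (fun c => MSym.out (τ c)) ++ MSym.S :: (acc ++ w.flatMap f).map MSym.lett) := by
  induction w generalizing acc p with
  | nil => simpa using .refl
  | cons b w ih =>
    have rest := ih (acc ++ f b) (p ++ [MSym.out (τ b)])
    rw [← List.append_assoc w] at rest
    simpa using (read_letter f τ b (w ++ acc) p).to_reflTransGen.trans rest

theorem sweep_of_ne_nil {w : List Γ} (hw : w ≠ []) (acc : List Γ) (p : List (MSym A Γ)) :
    Relation.TransGen (MStep f τ)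
      (p ++ MSym.S :: (w ++ acc).map MSym.lett)
      (p ++ w.map (fun c => MSym.out (τ c)) ++ MSym.S :: (acc ++ w.flatMap f).map MSym.lett) := by
  obtain ⟨b, w, rfl⟩ := List.exists_cons_of_ne_nil hw
  have rest := sweep f τ w (acc ++ f b) (p ++ [MSym.out (τ b)])
  rw [← List.append_assoc w] at rest
  simpa using (read_letter f τ b (w ++ acc) p).trans_left rest

end MStep

section Levels

variable {A Γ : Type} (f : Γ → List Γ) (τ : Γ → A) {a : Γ} {u : List Γ}

/-- The term `τ(fⁿ(a))(S(fⁿ(u)(E)))`. -/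
def levelTerm (a : Γ) (u : List Γ) (n : ℕ) : List (MSym A Γ) :=
  (wordIter f n [a]).map (fun c => MSym.out (τ c)) ++ [MSym.S] ++ (wordIter f n u).map MSym.lett

theorem levelTerm_zero : levelTerm f τ a u 0 = [MSym.out (τ a), MSym.S] ++ u.map MSym.lett := rfl

theorem reflTransGen_levelTerm_succ (hfa : f a = a :: u) (n : ℕ) :
    Relation.ReflTransGen (MStep f τ) (levelTerm f τ a u n) (levelTerm f τ a u (n + 1)) := by
  simpa [levelTerm, wordIter_succ_singleton_of_eq_cons f hfa, wordIter_succ] using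
    MStep.sweep f τ (wordIter f n u) [] ((wordIter f n [a]).map fun c => MSym.out (τ c))

theorem transGen_levelTerm_succ (hfa : f a = a :: u) {n : ℕ} (hn : wordIter f n u ≠ []) :
    Relation.TransGen (MStep f τ) (levelTerm f τ a u n) (levelTerm f τ a u (n + 1)) := by
  simpa [levelTerm, wordIter_succ_singleton_of_eq_cons f hfa, wordIter_succ] using
    MStep.sweep_of_ne_nil f τ hn [] ((wordIter f n [a]).map fun c => MSym.out (τ c))

theorem reflTransGen_levelTerm_add (hfa : f a = a :: u) (k m : ℕ) :
    Relation.ReflTransGen (MStep f τ) (levelTerm f τ a u k) (levelTerm f τ a u (k + m)) := by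
  induction m with
  | zero => rfl
  | succ m ih => exact ih.trans (reflTransGen_levelTerm_succ f τ hfa (k + m))

end Levels

theorem rewrite_to_level_n_general {A Γ : Type}
    (f : Γ → List Γ) (τ : Γ → A) (a : Γ) (u : List Γ)
    (hu : u ≠ []) (hfa : f a = a :: u) :
    ∀ n, 0 < n →
      Relation.TransGen (MStep f τ)
        ([MSym.out (τ a), MSym.S] ++ u.map MSym.lett)
        ((wordIter f n [a]).map (fun c => MSym.out (τ c)) ++ [MSym.S] ++
          (wordIter f n u).map MSym.lett) := by
  intro n hn
  obtain ⟨m, rfl⟩ : ∃ m, n = 1 + m := ⟨n - 1, by omega⟩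
  rw [← levelTerm_zero f τ]
  exact (transGen_levelTerm_succ f τ hfa (n := 0) hu).trans_left
    (reflTransGen_levelTerm_add f τ hfa 1 m)

/-- For every `n > 0` there is a finite `R_σ`-reduction
`τ(a)(S(u(E))) →⁺ τ(fⁿ(a))(S(fⁿ(u)(E)))`. -/
theorem rewrite_to_level_n {A Γ : Type} [Fintype A] [Fintype Γ]
    (f : Γ → List Γ) (τ : Γ → A) (a : Γ) (u : List Γ)
    (hne : ∀ b : Γ, f b ≠ []) (hu : u ≠ []) (hfa : f a = a :: u) :
    ∀ n, 0 < n →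
      Relation.TransGen (MStep f τ)
        ([MSym.out (τ a), MSym.S] ++ u.map MSym.lett)
        ((wordIter f n [a]).map (fun c => MSym.out (τ c)) ++ [MSym.S] ++
          (wordIter f n u).map MSym.lett) :=
  rewrite_to_level_n_general f τ a u hu hfa
end
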